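/- Let 𝒱 be an operator system contained in the diagonal matrices D_n ⊆ M_n(ℂ). If dim(𝒱) ≥ k² + k − 1, then 𝒱 has a quantum k-clique: there is a rank-k orthogonal projection P with dim(P𝒱P) = k². -/

import Mathlib

open Matrix

/-- The compression map `A ↦ P * A * P`. -/
noncomputable def compress {m : Type*} [Fintype m] (P : Matrix m m ℂ) :
    Matrix m m ℂ →ₗ[ℂ] Matrix m m ℂ where
  toFun A := P * A * P
  map_add' A B := by simp [Matrix.mul_add, Matrix.add_mul]
  map_smul' c A := by simp [Matrix.mul_smul, Matrix.smul_mul]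

/-- An operator system: a subspace of matrices containing the identity and
closed under conjugate transpose. -/
def IsOperatorSystem {m : Type*} [Fintype m] [DecidableEq m]
    (V : Submodule ℂ (Matrix m m ℂ)) : Prop :=
  (1 : Matrix m m ℂ) ∈ V ∧ ∀ A ∈ V, Aᴴ ∈ V

/-- The operator system `D_n` of diagonal matrices. -/
noncomputable def diagMatrices (n : ℕ) : Submodule ℂ (Matrix (Fin n) (Fin n) ℂ) where
  carrier := {A | A.IsDiag}
  add_mem' := Matrix.IsDiag.add
  zero_mem' := Matrix.isDiag_zero
  smul_mem' c _ h := h.smul c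

/-! The diagonals of the matrices in `V` form a subspace of `ℂⁿ` of dimension at least `k²`, so
there are `k²` coordinates `g t` on which this subspace surjects. By polarization, the rank-one
matrices `vecMulVec (star u) u` span `M_k`, hence `k²` of them, say for `u t`, form a basis.
For the `n × k` matrix `W` whose row `g t` is `u t` and whose other rows vanish,
`Wᴴ A W = ∑ t, A (g t) (g t) • vecMulVec (star (u t)) (u t)` for diagonal `A`, so `Wᴴ V W = M_k`.
Since `1 ∈ Wᴴ V W`, `W` is injective, and the orthogonal projection `P` onto its range has
rank `k` and `P V P ≅ Wᴴ V W`. -/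

open Module

theorem exists_injective_linearIndependent_comp_of_span_eq_top {K V ι κ : Type*} [Field K]
    [AddCommGroup V] [Module K V] [FiniteDimensional K V] [Fintype κ] {v : ι → V}
    (hv : Submodule.span K (Set.range v) = ⊤) (hκ : Fintype.card κ ≤ finrank K V) :
    ∃ g : κ → ι, Function.Injective g ∧ LinearIndependent K (v ∘ g) := by
  obtain ⟨s, a, ha, hspan, hli⟩ := exists_linearIndependent' K v
  have : Fintype s := @Fintype.ofFinite _ hli.finite
  have hcard : Fintype.card s = finrank K V := by
    rw [linearIndependent_iff_card_eq_finrank_span.mp hli, Set.finrank, hspan, hv, finrank_top]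
  obtain ⟨e⟩ := Function.Embedding.nonempty_of_card_le (hκ.trans hcard.ge)
  exact ⟨a ∘ e, ha.comp e.injective, hli.comp e e.injective⟩

theorem Submodule.exists_injective_map_funLeft_eq_top {K ι κ : Type*} [Field K] [Finite ι]
    [Fintype κ] (W : Submodule K (ι → K)) (hκ : Fintype.card κ ≤ finrank K W) :
    ∃ g : κ → ι, Function.Injective g ∧ W.map (LinearMap.funLeft K K g) = ⊤ := by
  let b := Module.finBasis K W
  -- the columns of a matrix span iff its rows are linearly independent
  have hcols : span K (Set.range (flip fun i j => (b i : ι → K) j)) = ⊤ :=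
    span_flip_eq_top_iff_linearIndependent.mpr (b.linearIndependent.map' W.subtype W.ker_subtype)
  obtain ⟨g, hg, hli⟩ :=
    exists_injective_linearIndependent_comp_of_span_eq_top hcols (by simpa using hκ)
  refine ⟨g, hg, eq_top_iff.mpr ?_⟩
  rw [← span_flip_eq_top_iff_linearIndependent.mpr hli, span_le]
  rintro _ ⟨i, rfl⟩
  exact ⟨b i, (b i).2, rfl⟩

theorem finrank_map_diagLinearMap {K m : Type*} [Field K] [Fintype m] [DecidableEq m]
    {V : Submodule K (Matrix m m K)} (hV : ∀ A ∈ V, A.IsDiag) :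
    finrank K (V.map (diagLinearMap m K K)) = finrank K V := by
  have hrange : V.map (diagLinearMap m K K)
      = LinearMap.range ((diagLinearMap m K K).comp V.subtype) := by
    rw [LinearMap.range_comp, Submodule.range_subtype]
  rw [hrange, LinearMap.finrank_range_of_inj]
  intro A B hAB
  rw [Subtype.ext_iff, ← (hV A A.2).diagonal_diag, ← (hV B B.2).diagonal_diag]
  exact congrArg diagonal hAB

theorem vecMulVec_star_polarization {m : Type*} (x y : m → ℂ) :
    vecMulVec (star x) y = (4 : ℂ)⁻¹ • (vecMulVec (star (x + y)) (x + y)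
      - vecMulVec (star (x - y)) (x - y)
      - Complex.I • vecMulVec (star (x + Complex.I • y)) (x + Complex.I • y)
      + Complex.I • vecMulVec (star (x - Complex.I • y)) (x - Complex.I • y)) := by
  ext i j
  simp only [vecMulVec_apply, Pi.star_apply, Pi.add_apply, Pi.sub_apply, Pi.smul_apply,
    smul_eq_mul, star_add, star_sub, star_mul', Complex.star_def, Complex.conj_I,
    Matrix.sub_apply, Matrix.add_apply, Matrix.smul_apply]
  linear_combination
    ((1 : ℂ) / 2 * (starRingEnd ℂ (x i) * y j) - 1 / 2 * (starRingEnd ℂ (y i) * x j)) * Complex.I_sq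

theorem span_vecMulVec_star_self_eq_top (m : Type*) [Fintype m] [DecidableEq m] :
    Submodule.span ℂ (Set.range fun u : m → ℂ => vecMulVec (star u) u) = ⊤ := by
  set S := Submodule.span ℂ (Set.range fun u : m → ℂ => vecMulVec (star u) u)
  have hmem : ∀ u, vecMulVec (star u) u ∈ S := fun u => Submodule.subset_span ⟨u, rfl⟩
  refine Submodule.eq_top_iff'.mpr fun M => ?_
  rw [matrix_eq_sum_single M]
  refine Submodule.sum_mem _ fun i _ => Submodule.sum_mem _ fun j _ => ?_
  rw [← mul_one (M i j), ← smul_eq_mul, ← smul_single]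
  refine S.smul_mem _ ?_
  rw [single_eq_single_vecMulVec_single, ← star_one, Pi.single_star, vecMulVec_star_polarization]
  exact S.smul_mem _ (S.add_mem (S.sub_mem (S.sub_mem (hmem _) (hmem _)) (S.smul_mem _ (hmem _)))
    (S.smul_mem _ (hmem _)))

theorem exists_span_vecMulVec_star_self_eq_top (m : Type*) [Fintype m] [DecidableEq m] :
    ∃ u : m × m → m → ℂ,
      Submodule.span ℂ (Set.range fun t => vecMulVec (star (u t)) (u t)) = ⊤ := by
  obtain ⟨κ, a, -, hspan, hli⟩ :=
    exists_linearIndependent' ℂ fun u : m → ℂ => vecMulVec (star u) u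
  rw [span_vecMulVec_star_self_eq_top] at hspan
  let e := (Basis.mk hli hspan.ge).indexEquiv (Matrix.stdBasis ℂ m m)
  refine ⟨a ∘ e.symm, ?_⟩
  rw [← hspan, ← e.symm.surjective.range_comp]
  rfl

def sandwich {R a b c d : Type*} [CommSemiring R] [Fintype b] [Fintype c]
    (B : Matrix a b R) (C : Matrix c d R) : Matrix b c R →ₗ[R] Matrix a d R where
  toFun A := B * A * C
  map_add' _ _ := by rw [Matrix.mul_add, Matrix.add_mul]
  map_smul' _ _ := by rw [Matrix.mul_smul, Matrix.smul_mul]; rfl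

@[simp]
theorem sandwich_apply {R a b c d : Type*} [CommSemiring R] [Fintype b] [Fintype c]
    (B : Matrix a b R) (C : Matrix c d R) (A : Matrix b c R) : sandwich B C A = B * A * C :=
  rfl

theorem conjTranspose_mul_diagonal_mul {R κ k : Type*} [CommSemiring R] [Star R] [Fintype κ]
    [DecidableEq κ] (U : Matrix κ k R) (d : κ → R) :
    Uᴴ * diagonal d * U = ∑ t, d t • vecMulVec (star (U t)) (U t) := by
  ext i j
  rw [mul_apply]
  simp only [mul_diagonal, conjTranspose_apply, Matrix.sum_apply, Matrix.smul_apply,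
    vecMulVec_apply, Pi.star_apply, smul_eq_mul]
  exact Finset.sum_congr rfl fun _ _ => by ring

theorem conjTranspose_submatrix_one_mul_mul {R m κ : Type*} [Semiring R] [StarRing R] [Fintype m]
    [DecidableEq m] (A : Matrix m m R) (g : κ → m) :
    ((1 : Matrix m m R).submatrix id g)ᴴ * A * (1 : Matrix m m R).submatrix id g
      = A.submatrix g g := by
  ext i j
  simp [mul_apply, one_apply]

theorem exists_map_sandwich_eq_top {m k : Type*} [Fintype m] [DecidableEq m] [Fintype k]
    [DecidableEq k] {V : Submodule ℂ (Matrix m m ℂ)} (hV : ∀ A ∈ V, A.IsDiag)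
    (hdim : Fintype.card k ^ 2 ≤ finrank ℂ V) :
    ∃ W : Matrix m k ℂ, V.map (sandwich Wᴴ W) = ⊤ := by
  obtain ⟨u, hu⟩ := exists_span_vecMulVec_star_self_eq_top k
  obtain ⟨g, hg, hgV⟩ := (V.map (diagLinearMap m ℂ ℂ)).exists_injective_map_funLeft_eq_top
    (κ := k × k) (by rwa [finrank_map_diagLinearMap hV, Fintype.card_prod, ← sq])
  let E := (1 : Matrix m m ℂ).submatrix id g
  refine ⟨E * of u, eq_top_iff.mpr ?_⟩
  rw [← hu, Submodule.span_le]
  rintro _ ⟨t, rfl⟩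
  obtain ⟨_, ⟨A, hA, rfl⟩, hAt⟩ := hgV.ge (Submodule.mem_top (x := Pi.single t 1))
  refine ⟨A, hA, ?_⟩
  have hdiag : A.submatrix g g = diagonal (Pi.single t 1) := by
    rw [← (hV A hA).diagonal_diag, submatrix_diagonal _ _ hg, ← hAt]
    rfl
  calc (E * of u)ᴴ * A * (E * of u) = (of u)ᴴ * (Eᴴ * A * E) * of u := by
        simp only [conjTranspose_mul, Matrix.mul_assoc]
    _ = ∑ s, Pi.single t 1 s • vecMulVec (star (u s)) (u s) := by
        rw [conjTranspose_submatrix_one_mul_mul, hdiag, conjTranspose_mul_diagonal_mul]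
        rfl
    _ = vecMulVec (star (u t)) (u t) := by
        simp [Pi.single_apply]

theorem mulVec_injective_of_map_sandwich_eq_top {m k : Type*} [Fintype m] [Fintype k]
    [DecidableEq k] {V : Submodule ℂ (Matrix m m ℂ)} {W : Matrix m k ℂ}
    (hV : V.map (sandwich Wᴴ W) = ⊤) :
    Function.Injective W.mulVec := by
  obtain ⟨A, -, hA⟩ := hV.ge (Submodule.mem_top (x := 1))
  refine Function.LeftInverse.injective (g := (Wᴴ * A).mulVec) fun v => ?_
  rw [mulVec_mulVec, ← sandwich_apply, hA, one_mulVec]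

section RangeProjection

open scoped ComplexOrder

variable {𝕜 m k : Type*} [RCLike 𝕜] [Fintype m] [Fintype k] [DecidableEq k]

noncomputable def rangeProjection (W : Matrix m k 𝕜) : Matrix m m 𝕜 := W * (Wᴴ * W)⁻¹ * Wᴴ

variable {W : Matrix m k 𝕜}

theorem conjTranspose_rangeProjection : (rangeProjection W)ᴴ = rangeProjection W := by
  simp only [rangeProjection, conjTranspose_mul, conjTranspose_conjTranspose,
    conjTranspose_nonsing_inv, Matrix.mul_assoc]

theorem rangeProjection_mul (hW : Function.Injective W.mulVec) : rangeProjection W * W = W := by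
  have hG : IsUnit (Wᴴ * W).det :=
    (isUnit_iff_isUnit_det _).mp (PosDef.conjTranspose_mul_self W hW).isUnit
  rw [rangeProjection, Matrix.mul_assoc, Matrix.mul_assoc, nonsing_inv_mul _ hG, Matrix.mul_one]

theorem conjTranspose_mul_rangeProjection (hW : Function.Injective W.mulVec) :
    Wᴴ * rangeProjection W = Wᴴ := by
  simpa [conjTranspose_rangeProjection] using congrArg conjTranspose (rangeProjection_mul hW)

theorem rangeProjection_mul_self (hW : Function.Injective W.mulVec) :
    rangeProjection W * rangeProjection W = rangeProjection W := by
  nth_rw 2 [rangeProjection]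
  simp only [← Matrix.mul_assoc, rangeProjection_mul hW]
  rfl

theorem rank_rangeProjection (hW : Function.Injective W.mulVec) :
    (rangeProjection W).rank = Fintype.card k := by
  have hrank : W.rank = Fintype.card k := by
    rw [Matrix.rank, LinearMap.finrank_range_of_inj hW, finrank_fintype_fun_eq_card]
  refine le_antisymm ?_ ?_
  · exact (rank_mul_le_left _ _).trans ((rank_mul_le_left _ _).trans hrank.le)
  · calc Fintype.card k = (rangeProjection W * W).rank := by rw [rangeProjection_mul hW, hrank]
      _ ≤ _ := rank_mul_le_left _ _

end RangeProjection

theorem finrank_map_compress_rangeProjection {m k : Type*} [Fintype m] [Fintype k]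
    [DecidableEq k] {W : Matrix m k ℂ} (hW : Function.Injective W.mulVec)
    (V : Submodule ℂ (Matrix m m ℂ)) :
    finrank ℂ (V.map (compress (rangeProjection W))) = finrank ℂ (V.map (sandwich Wᴴ W)) := by
  have hfactor : compress (rangeProjection W)
      = (sandwich (W * (Wᴴ * W)⁻¹) ((Wᴴ * W)⁻¹ * Wᴴ)).comp (sandwich Wᴴ W) := by
    ext1 A
    simp [compress, rangeProjection, Matrix.mul_assoc]
  have hrecover : sandwich Wᴴ W = (sandwich Wᴴ W).comp (compress (rangeProjection W)) := by
    ext1 A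
    simp only [LinearMap.comp_apply, sandwich_apply, compress, LinearMap.coe_mk, AddHom.coe_mk,
      ← Matrix.mul_assoc, conjTranspose_mul_rangeProjection hW]
    rw [Matrix.mul_assoc (Wᴴ * A), rangeProjection_mul hW]
  apply le_antisymm
  · rw [hfactor, Submodule.map_comp]
    exact Submodule.finrank_map_le _ _
  · rw [hrecover, Submodule.map_comp]
    exact Submodule.finrank_map_le _ _

theorem diag_system_quantum_clique_general (n k : ℕ)
    (V : Submodule ℂ (Matrix (Fin n) (Fin n) ℂ))
    (hsub : V ≤ diagMatrices n)
    (hdim : k ^ 2 + k - 1 ≤ Module.finrank ℂ V) :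
    ∃ P : Matrix (Fin n) (Fin n) ℂ, P * P = P ∧ Pᴴ = P ∧ P.rank = k ∧
      Module.finrank ℂ (V.map (compress P)) = k ^ 2 := by
  have hk : k ^ 2 ≤ finrank ℂ V := by
    rcases Nat.eq_zero_or_pos k with rfl | hk
    · exact Nat.zero_le _
    · exact (Nat.le_sub_one_of_lt (Nat.lt_add_of_pos_right hk)).trans hdim
  obtain ⟨W, hW⟩ := exists_map_sandwich_eq_top (k := Fin k) (fun A hA => hsub hA)
    (by rwa [Fintype.card_fin])
  have hWinj := mulVec_injective_of_map_sandwich_eq_top hW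
  refine ⟨rangeProjection W, rangeProjection_mul_self hWinj, conjTranspose_rangeProjection,
    by rw [rank_rangeProjection hWinj, Fintype.card_fin], ?_⟩
  rw [finrank_map_compress_rangeProjection hWinj, hW, finrank_top, finrank_matrix,
    finrank_self, Fintype.card_fin, mul_one, sq]

/-- An operator system contained in the diagonal matrices with dimension at
least `k² + k - 1` has a quantum `k`-clique. -/
theorem diag_system_quantum_clique (n k : ℕ)
    (V : Submodule ℂ (Matrix (Fin n) (Fin n) ℂ)) (hos : IsOperatorSystem V)
    (hsub : V ≤ diagMatrices n)
    (hdim : k ^ 2 + k - 1 ≤ Module.finrank ℂ V) :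
    ∃ P : Matrix (Fin n) (Fin n) ℂ, P * P = P ∧ Pᴴ = P ∧ P.rank = k ∧
      Module.finrank ℂ (V.map (compress P)) = k ^ 2 :=
  diag_system_quantum_clique_general n k V hsub hdim
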